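/- arXiv:2603.02157 — 3 statements merged into one kernel-verified Lean document; each statement's English description precedes it below -/
import Mathlib

section
/- Distance of product complexes (special case): Let C be a bounded chain complex and D a two-term chain complex D_1 → D_0 over F2. Then the k-systolic distance of the tensor product complex satisfies d_k(C⊗D) = min(d_{k-1}(C)·d_1(D), d_k(C)·d_0(D)), where d_j denotes the minimum Hamming weight of a nonzero homology class representative minimized over classes, with the convention d_j = ∞ if H_j = 0. -/
/-!
A chain of `C ⊗ D` in degree `k` is a pair `(X, Y)` with `X ∈ C_{k-1} ⊗ D₁` and `Y ∈ C_k ⊗ D₀`,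
viewed as matrices whose rows are chains of `C`. Tensoring a minimal nontrivial cycle of `C` with
one of `D` gives the upper bounds. Conversely let `(X, Y)` be a nontrivial cycle. If some row of
`X` is not a boundary, a functional `ℓ` vanishing on `B_{k-1}(C)` but not on that row turns `X`
into a nonzero cycle `X ℓ` of `D₁`; each of its `≥ d₁(D)` nonzero entries marks a row of `X` that
is a nontrivial cycle of `C`, so `|X| ≥ d_{k-1}(C) d₁(D)`. Symmetrically, if `g ᵥ* Y` is a
nontrivial cycle of `C_k` for some `g ⊥ im e`, then every column of `Y` meeting its support is a
non-boundary of `D₀`, so `|Y| ≥ d_k(C) d₀(D)`. If neither happens, `(X, Y)` is a boundary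
(the injectivity half of the Künneth formula over a field).
-/

open Matrix Kronecker

/-- The `k`-systolic distance of a based `𝔽₂`-chain complex at the middle term of
`· --B--> · --A--> ·` : the minimum Hamming weight of a representative of a
nontrivial homology class (a vector in `ker A` not in `im B`), with the
convention `∞` when the homology vanishes. -/
noncomputable def sysDist {ι κ τ : Type} [Fintype ι] [Fintype κ] [Fintype τ]
    (A : Matrix κ ι (ZMod 2)) (B : Matrix ι τ (ZMod 2)) : ℕ∞ :=
  sInf {w : ℕ∞ | ∃ x : ι → ZMod 2,
    A.mulVecLin x = 0 ∧ x ∉ LinearMap.range B.mulVecLin ∧ w = hammingNorm x}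

theorem Matrix.mul_transpose_row {R l m n : Type*} [CommSemiring R] [Fintype m]
    (P : Matrix l m R) (A : Matrix n m R) (j : l) : (P * Aᵀ) j = A *ᵥ P j :=
  vecMul_transpose A (P j)

section LinearAlgebra

variable {K : Type*} [Field K]

theorem Matrix.exists_vecMul_eq_zero_dotProduct_eq_one {ι τ : Type*} [Fintype ι] [Fintype τ]
    (B : Matrix ι τ K) {x : ι → K} (hx : x ∉ LinearMap.range B.mulVecLin) :
    ∃ ℓ : ι → K, ℓ ᵥ* B = 0 ∧ ℓ ⬝ᵥ x = 1 := by
  classical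
  obtain ⟨f, hfx, hf⟩ := Submodule.exists_dual_map_eq_bot_of_notMem hx inferInstance
  set ℓ : ι → K := fun i => f (Pi.single i 1)
  have hℓ (v : ι → K) : ℓ ⬝ᵥ v = f v := by
    conv_rhs => rw [pi_eq_sum_univ' v]
    simp [ℓ, dotProduct, mul_comm]
  refine ⟨(f x)⁻¹ • ℓ, ?_, ?_⟩
  · ext j
    have : f (B *ᵥ Pi.single j 1) = 0 :=
      (Submodule.eq_bot_iff _).1 hf _ ⟨_, ⟨Pi.single j 1, rfl⟩, rfl⟩
    rw [mulVec_single_one, ← hℓ] at this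
    rw [smul_vecMul, Pi.smul_apply, Pi.zero_apply, show (ℓ ᵥ* B) j = 0 from this, smul_zero]
  · rw [smul_dotProduct, hℓ, smul_eq_mul, inv_mul_cancel₀ hfx]

theorem Matrix.notMem_range_of_vecMul_eq_zero {ι τ : Type*} [Fintype ι] [Fintype τ]
    {B : Matrix ι τ K} {ℓ x : ι → K} (hℓ : ℓ ᵥ* B = 0) (hx : ℓ ⬝ᵥ x ≠ 0) :
    x ∉ LinearMap.range B.mulVecLin := by
  rintro ⟨v, rfl⟩
  rw [mulVecLin_apply, dotProduct_mulVec, hℓ, zero_dotProduct] at hx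
  exact hx rfl

theorem LinearMap.exists_sub_comp_mem_of_ker_le {V W U : Type*} [AddCommGroup V] [Module K V]
    [AddCommGroup W] [Module K W] [AddCommGroup U] [Module K U]
    (T : V →ₗ[K] W) (Ψ : V →ₗ[K] U) {Z B : Submodule K U} (hΨ : ∀ v, Ψ v ∈ Z)
    (hker : ∀ v, T v = 0 → Ψ v ∈ B) :
    ∃ h : W →ₗ[K] U, (∀ w, h w ∈ Z) ∧ ∀ v, Ψ v - h (T v) ∈ B := by
  set B' := B.comap Z.subtype
  set f := B'.mkQ ∘ₗ Ψ.codRestrict Z hΨ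
  have hle : LinearMap.ker T ≤ LinearMap.ker f := fun v hv => by
    simpa [f, B', Submodule.Quotient.mk_eq_zero] using hker v hv
  obtain ⟨s, hs⟩ := ((LinearMap.ker T).liftQ T le_rfl).exists_leftInverse_of_injective
    (Submodule.ker_liftQ_eq_bot _ _ _ le_rfl)
  obtain ⟨σ, hσ⟩ := B'.mkQ.exists_rightInverse_of_surjective (Submodule.range_mkQ B')
  refine ⟨Z.subtype ∘ₗ σ ∘ₗ (LinearMap.ker T).liftQ f hle ∘ₗ s, fun w => (σ _).2, fun v => ?_⟩
  have hsT : s (T v) = (LinearMap.ker T).mkQ v := by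
    simpa using LinearMap.congr_fun hs ((LinearMap.ker T).mkQ v)
  have hσf : B'.mkQ (σ (f v)) = B'.mkQ (Ψ.codRestrict Z hΨ v) := LinearMap.congr_fun hσ (f v)
  have := (Submodule.Quotient.eq B').1 hσf.symm
  rw [Submodule.mem_comap] at this
  simpa [hsT] using this

end LinearAlgebra

section HammingNorm

variable {R : Type*}

theorem hammingNorm_sumElim {α β : Type*} [Fintype α] [Fintype β] [DecidableEq R] [Zero R]
    (u : α → R) (v : β → R) :
    hammingNorm (Sum.elim u v) = hammingNorm u + hammingNorm v := by
  simp only [hammingNorm, Finset.card_filter]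
  exact Fintype.sum_sum_type _

theorem Matrix.hammingNorm_vec {m n : Type*} [Fintype m] [Fintype n] [DecidableEq R] [Zero R]
    (M : Matrix m n R) : hammingNorm (vec M) = ∑ i, hammingNorm (M i) := by
  simp only [hammingNorm, Finset.card_filter]
  exact Fintype.sum_prod_type_right _

theorem Matrix.hammingNorm_vec_eq_sum_col {m n : Type*} [Fintype m] [Fintype n] [DecidableEq R]
    [Zero R] (M : Matrix m n R) : hammingNorm (vec M) = ∑ j, hammingNorm (Mᵀ j) := by
  simp only [hammingNorm, Finset.card_filter]
  exact Fintype.sum_prod_type _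

theorem Matrix.hammingNorm_vec_vecMulVec {m n : Type*} [Fintype m] [Fintype n] [DecidableEq R]
    [MulZeroClass R] [NoZeroDivisors R] (y : m → R) (x : n → R) :
    hammingNorm (vec (vecMulVec y x)) = hammingNorm y * hammingNorm x := by
  have hrow (i : m) : hammingNorm (vecMulVec y x i) = if y i ≠ 0 then hammingNorm x else 0 := by
    by_cases hy : y i = 0 <;> simp [hammingNorm, vecMulVec_apply, hy]
  rw [hammingNorm_vec, Finset.sum_congr rfl fun i _ => hrow i, Finset.sum_ite,
    Finset.sum_const_zero, add_zero, Finset.sum_const, smul_eq_mul]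
  rfl

theorem mul_hammingNorm_le_sum {m : Type*} [Fintype m] [DecidableEq R] [Zero R] {v : m → R}
    {w : m → ℕ∞} {a : ℕ∞} (h : ∀ k, v k ≠ 0 → a ≤ w k) :
    a * hammingNorm v ≤ ∑ k, w k :=
  calc a * hammingNorm v = ∑ k ∈ Finset.univ.filter (v · ≠ 0), a := by
        simp [hammingNorm, mul_comm]
    _ ≤ ∑ k ∈ Finset.univ.filter (v · ≠ 0), w k :=
        Finset.sum_le_sum fun k hk => h k (Finset.mem_filter.1 hk).2
    _ ≤ ∑ k, w k := Finset.sum_le_sum_of_subset (Finset.filter_subset _ _)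

end HammingNorm

section SysDist

variable {ι κ τ ι' κ' τ' : Type} [Fintype ι] [Fintype κ] [Fintype τ] [Fintype ι'] [Fintype κ']
  [Fintype τ'] {A : Matrix κ ι (ZMod 2)} {B : Matrix ι τ (ZMod 2)}

theorem sysDist_le_hammingNorm {x : ι → ZMod 2} (hx : A.mulVecLin x = 0)
    (hxB : x ∉ LinearMap.range B.mulVecLin) : sysDist A B ≤ hammingNorm x :=
  sInf_le ⟨x, hx, hxB, rfl⟩

theorem le_sysDist {n : ℕ∞}
    (h : ∀ x, A.mulVecLin x = 0 → x ∉ LinearMap.range B.mulVecLin → n ≤ hammingNorm x) :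
    n ≤ sysDist A B :=
  le_sInf fun _ ⟨x, hx, hxB, hw⟩ => hw ▸ h x hx hxB

theorem exists_hammingNorm_eq_sysDist (h : sysDist A B ≠ ⊤) :
    ∃ x, A.mulVecLin x = 0 ∧ x ∉ LinearMap.range B.mulVecLin ∧
      (hammingNorm x : ℕ∞) = sysDist A B := by
  have hne : Set.Nonempty {w : ℕ∞ | ∃ x : ι → ZMod 2,
      A.mulVecLin x = 0 ∧ x ∉ LinearMap.range B.mulVecLin ∧ w = hammingNorm x} :=
    Set.nonempty_iff_ne_empty.2 fun he => h (by rw [sysDist, he, sInf_empty])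
  obtain ⟨x, hx, hxB, hw⟩ := csInf_mem hne
  exact ⟨x, hx, hxB, hw.symm⟩

theorem sysDist_ne_zero : sysDist A B ≠ 0 := by
  refine (lt_of_lt_of_le zero_lt_one (le_sysDist fun x _ hxB => ?_)).ne'
  have hx : x ≠ 0 := by rintro rfl; exact hxB (Submodule.zero_mem _)
  exact_mod_cast hammingNorm_pos_iff.2 hx

theorem le_sysDist_mul_sysDist {A' : Matrix κ' ι' (ZMod 2)} {B' : Matrix ι' τ' (ZMod 2)} {n : ℕ∞}
    (h : ∀ x y, A.mulVecLin x = 0 → x ∉ LinearMap.range B.mulVecLin → A'.mulVecLin y = 0 →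
      y ∉ LinearMap.range B'.mulVecLin → n ≤ hammingNorm x * hammingNorm y) :
    n ≤ sysDist A B * sysDist A' B' := by
  rcases eq_or_ne (sysDist A B) ⊤ with h₁ | h₁
  · rw [h₁, ENat.top_mul sysDist_ne_zero]; exact le_top
  rcases eq_or_ne (sysDist A' B') ⊤ with h₂ | h₂
  · rw [h₂, ENat.mul_top sysDist_ne_zero]; exact le_top
  obtain ⟨x, hx, hxB, hx'⟩ := exists_hammingNorm_eq_sysDist h₁
  obtain ⟨y, hy, hyB, hy'⟩ := exists_hammingNorm_eq_sysDist h₂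
  rw [← hx', ← hy']
  exact_mod_cast h x y hx hxB hy hyB

end SysDist

section ProductComplex

theorem exists_eq_sumElim_vec {K β γ δ ε : Type*} (x : (γ × ε) ⊕ (β × δ) → K) :
    ∃ (X : Matrix ε γ K) (Y : Matrix δ β K), x = Sum.elim (vec X) (vec Y) :=
  ⟨of fun j i => x (.inl (i, j)), of fun j i => x (.inr (i, j)), by ext (_ | _) <;> rfl⟩

variable {K : Type*} [CommRing K] {β γ γ' δ ε : Type*} [Fintype β] [Fintype γ] [Fintype δ]
  [Fintype ε] [DecidableEq γ] [DecidableEq δ] [DecidableEq ε]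

/-- The boundary `(C ⊗ D)_p → (C ⊗ D)_{p-1}` for `C_p --b--> C_{p-1} --a--> C_{p-2}` and
`D = (D₁ --e--> D₀)`, where `(C ⊗ D)_p = C_{p-1} ⊗ D₁ ⊕ C_p ⊗ D₀`. By `Matrix.vec`, a chain in
`C_q ⊗ D_r` is a matrix whose rows are indexed by the basis of `D_r` and are chains of `C_q`. -/
def productBoundary (a : Matrix γ' γ K) (b : Matrix γ β K) (e : Matrix δ ε K) :
    Matrix ((γ' × ε) ⊕ (γ × δ)) ((γ × ε) ⊕ (β × δ)) K :=
  fromBlocks (a ⊗ₖ 1) 0 (1 ⊗ₖ e) (b ⊗ₖ 1)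

theorem productBoundary_mulVec_sumElim_vec (a : Matrix γ' γ K) (b : Matrix γ β K)
    (e : Matrix δ ε K) (X : Matrix ε γ K) (Y : Matrix δ β K) :
    productBoundary a b e *ᵥ Sum.elim (vec X) (vec Y) =
      Sum.elim (vec (X * aᵀ)) (vec (e * X + Y * bᵀ)) := by
  simp [productBoundary, fromBlocks_mulVec, kronecker_mulVec_vec, vec_add]

theorem sumElim_vec_mem_range_productBoundary_iff (a : Matrix γ' γ K) (b : Matrix γ β K)
    (e : Matrix δ ε K) (X : Matrix ε γ' K) (Y : Matrix δ γ K) :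
    Sum.elim (vec X) (vec Y) ∈ LinearMap.range (productBoundary a b e).mulVecLin ↔
      ∃ (P : Matrix ε γ K) (Q : Matrix δ β K), X = P * aᵀ ∧ Y = e * P + Q * bᵀ := by
  constructor
  · rintro ⟨w, hw⟩
    obtain ⟨P, Q, rfl⟩ := exists_eq_sumElim_vec w
    rw [mulVecLin_apply, productBoundary_mulVec_sumElim_vec, Sum.elim_eq_iff] at hw
    exact ⟨P, Q, vec_inj.1 hw.1.symm, vec_inj.1 hw.2.symm⟩
  · rintro ⟨P, Q, rfl, rfl⟩
    exact ⟨Sum.elim (vec P) (vec Q), productBoundary_mulVec_sumElim_vec a b e P Q⟩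

theorem productBoundary_mulVec_sumElim_vec_eq_zero_iff (a : Matrix γ' γ (ZMod 2))
    (b : Matrix γ β (ZMod 2)) (e : Matrix δ ε (ZMod 2)) (X : Matrix ε γ (ZMod 2))
    (Y : Matrix δ β (ZMod 2)) :
    productBoundary a b e *ᵥ Sum.elim (vec X) (vec Y) = 0 ↔ X * aᵀ = 0 ∧ e * X = Y * bᵀ := by
  rw [productBoundary_mulVec_sumElim_vec, ← Sum.elim_zero_zero, Sum.elim_eq_iff,
    vec_eq_zero_iff, vec_eq_zero_iff, add_eq_zero_iff_eq_neg, ZModModule.neg_eq_self]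

end ProductComplex

section Kunneth

variable {K : Type*} [Field K]

theorem exists_boundary_of_slices_mem_range {α β γ δ ε : Type*} [Fintype α] [Fintype β]
    [Fintype δ] [Fintype ε] [DecidableEq δ] [DecidableEq ε]
    (d₁ : Matrix γ β K) (d₂ : Matrix β α K)
    (e : Matrix δ ε K) {X : Matrix ε γ K} {Y : Matrix δ β K} (hXY : e * X = Y * d₁ᵀ)
    (hX : ∀ j, X j ∈ LinearMap.range d₁.mulVecLin)
    (hY : ∀ g, g ᵥ* e = 0 → g ᵥ* Y ∈ LinearMap.range d₂.mulVecLin) :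
    ∃ (P : Matrix ε β K) (Q : Matrix δ α K), X = P * d₁ᵀ ∧ Y = e * P + Q * d₂ᵀ := by
  obtain ⟨P₀, hP₀⟩ : ∃ P₀ : Matrix ε β K, ∀ j, d₁.mulVecLin (P₀ j) = X j :=
    ⟨_, fun j => (hX j).choose_spec⟩
  have hX' : X = P₀ * d₁ᵀ := funext fun j => by rw [mul_transpose_row, ← hP₀ j, mulVecLin_apply]
  set Y' := Y - e * P₀ with hY'
  have hY'cyc : Y' * d₁ᵀ = 0 := by rw [hY', Matrix.sub_mul, Matrix.mul_assoc, ← hX', hXY, sub_self]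
  -- The rows of `Y'` are cycles and `g ↦ [g ᵥ* Y']` vanishes on `ker (· ᵥ* e)`; factoring it
  -- through `· ᵥ* e` and lifting to cycles gives the correction `c` of `P₀`.
  obtain ⟨h, hZ, hB⟩ := LinearMap.exists_sub_comp_mem_of_ker_le (vecMulLinear e) (vecMulLinear Y')
    (Z := LinearMap.ker d₁.mulVecLin) (B := LinearMap.range d₂.mulVecLin)
    (fun g => by
      rw [LinearMap.mem_ker, mulVecLin_apply, vecMulLinear_apply, ← vecMul_transpose,
        vecMul_vecMul, hY'cyc, vecMul_zero])
    (fun g hg => by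
      rw [vecMulLinear_apply] at hg
      rw [vecMulLinear_apply, hY', vecMul_sub, ← vecMul_vecMul, hg, zero_vecMul, sub_zero]
      exact hY g hg)
  set c : Matrix ε β K := (LinearMap.toMatrix' h)ᵀ
  have hc (v : ε → K) : v ᵥ* c = h v := by rw [vecMul_transpose, LinearMap.toMatrix'_mulVec]
  have hcrow (j : ε) : c j = h (Pi.single j 1) := by rw [← hc, single_one_vecMul]; rfl
  have hrow (i : δ) : Y' i - (e * c) i ∈ LinearMap.range d₂.mulVecLin := by
    have := hB (Pi.single i 1)
    rwa [vecMulLinear_apply, vecMulLinear_apply, single_one_vecMul, single_one_vecMul, ← hc] at this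
  obtain ⟨Q, hQ⟩ : ∃ Q : Matrix δ α K, ∀ i, d₂.mulVecLin (Q i) = Y' i - (e * c) i :=
    ⟨_, fun i => (hrow i).choose_spec⟩
  have hQ' : Q * d₂ᵀ = Y' - e * c :=
    funext fun i => by rw [mul_transpose_row, ← mulVecLin_apply, hQ i]; rfl
  have hc₀ : c * d₁ᵀ = 0 :=
    funext fun j => by rw [mul_transpose_row, hcrow, ← mulVecLin_apply]; exact hZ _
  refine ⟨P₀ + c, Q, by rw [Matrix.add_mul, hc₀, add_zero, hX'], ?_⟩
  rw [hQ', hY', Matrix.mul_add]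
  abel

end Kunneth

section SystolicDistance

variable {α β γ γ' δ ε τ τ' : Type} [Fintype α] [Fintype β] [Fintype γ] [Fintype γ'] [Fintype δ]
  [Fintype ε] [Fintype τ] [Fintype τ']
  {d₀ : Matrix γ' γ (ZMod 2)} {d₁ : Matrix γ β (ZMod 2)} {d₂ : Matrix β α (ZMod 2)}
  {e : Matrix δ ε (ZMod 2)}

theorem sysDist_mul_sysDist_le_hammingNorm_of_row_notMem_range {X : Matrix ε γ (ZMod 2)}
    {Y : Matrix δ β (ZMod 2)} (hX : X * d₀ᵀ = 0) (hXY : e * X = Y * d₁ᵀ) {j : ε}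
    (hj : X j ∉ LinearMap.range d₁.mulVecLin) :
    sysDist d₀ d₁ * sysDist e (0 : Matrix ε τ (ZMod 2)) ≤ hammingNorm (vec X) := by
  obtain ⟨ℓ, hℓ, hℓX⟩ := exists_vecMul_eq_zero_dotProduct_eq_one d₁ hj
  have hy : e.mulVecLin (X *ᵥ ℓ) = 0 := by
    rw [mulVecLin_apply, mulVec_mulVec, hXY, ← mulVec_mulVec, mulVec_transpose, hℓ, mulVec_zero]
  have hyB : X *ᵥ ℓ ∉ LinearMap.range (0 : Matrix ε τ (ZMod 2)).mulVecLin := by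
    rintro ⟨v, hv⟩
    have hyj : (X *ᵥ ℓ) j = 1 := by rw [← hℓX, dotProduct_comm]; rfl
    simp [← hv] at hyj
  calc sysDist d₀ d₁ * sysDist e 0 ≤ sysDist d₀ d₁ * hammingNorm (X *ᵥ ℓ) :=
        mul_le_mul_right (sysDist_le_hammingNorm hy hyB) _
    _ ≤ ∑ k, (hammingNorm (X k) : ℕ∞) := mul_hammingNorm_le_sum fun k hk =>
        sysDist_le_hammingNorm (by rw [mulVecLin_apply, ← mul_transpose_row, hX]; rfl)
          (notMem_range_of_vecMul_eq_zero hℓ (by rwa [dotProduct_comm]))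
    _ = hammingNorm (vec X) := by rw [hammingNorm_vec, Nat.cast_sum]

theorem sysDist_mul_sysDist_le_hammingNorm_of_vecMul_notMem_range {X : Matrix ε γ (ZMod 2)}
    {Y : Matrix δ β (ZMod 2)} (hXY : e * X = Y * d₁ᵀ) {g : δ → ZMod 2} (hg : g ᵥ* e = 0)
    (hgY : g ᵥ* Y ∉ LinearMap.range d₂.mulVecLin) :
    sysDist d₁ d₂ * sysDist (0 : Matrix τ δ (ZMod 2)) e ≤ hammingNorm (vec Y) := by
  have hz : d₁.mulVecLin (g ᵥ* Y) = 0 := by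
    rw [mulVecLin_apply, ← vecMul_transpose, vecMul_vecMul, ← hXY, ← vecMul_vecMul, hg,
      zero_vecMul]
  rw [mul_comm]
  calc sysDist (0 : Matrix τ δ (ZMod 2)) e * sysDist d₁ d₂
        ≤ sysDist (0 : Matrix τ δ (ZMod 2)) e * hammingNorm (g ᵥ* Y) :=
        mul_le_mul_right (sysDist_le_hammingNorm hz hgY) _
    _ ≤ ∑ i, (hammingNorm (Yᵀ i) : ℕ∞) := mul_hammingNorm_le_sum fun i hi =>
        sysDist_le_hammingNorm (by rw [mulVecLin_apply, zero_mulVec])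
          (notMem_range_of_vecMul_eq_zero hg hi)
    _ = hammingNorm (vec Y) := by rw [hammingNorm_vec_eq_sum_col, Nat.cast_sum]

variable [DecidableEq β] [DecidableEq γ] [DecidableEq δ] [DecidableEq ε] (d₀ d₁ d₂ e)

theorem sysDist_productBoundary_le_left :
    sysDist (productBoundary d₀ d₁ e) (productBoundary d₁ d₂ e) ≤
      sysDist d₀ d₁ * sysDist e (0 : Matrix ε τ (ZMod 2)) := by
  refine le_sysDist_mul_sysDist fun x y hx hxB hy hyB => ?_
  rw [mulVecLin_apply] at hx hy
  obtain ⟨j, hj⟩ : ∃ j, y j ≠ 0 :=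
    Function.ne_iff.1 fun h => hyB (h ▸ Submodule.zero_mem _)
  have hcyc : (productBoundary d₀ d₁ e).mulVecLin
      (Sum.elim (vec (vecMulVec y x)) (vec (0 : Matrix δ β (ZMod 2)))) = 0 := by
    rw [mulVecLin_apply, productBoundary_mulVec_sumElim_vec_eq_zero_iff, vecMulVec_mul,
      vecMul_transpose, hx, mul_vecMulVec, hy]
    exact ⟨funext₂ fun _ _ => mul_zero _, by simp⟩
  have hnb : Sum.elim (vec (vecMulVec y x)) (vec (0 : Matrix δ β (ZMod 2))) ∉
      LinearMap.range (productBoundary d₁ d₂ e).mulVecLin := by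
    rw [sumElim_vec_mem_range_productBoundary_iff]
    rintro ⟨P, Q, hP, -⟩
    have hrow : y j • x = d₁.mulVecLin (P j) := by
      rw [mulVecLin_apply, ← mul_transpose_row, ← hP]; rfl
    exact hxB ((Submodule.smul_mem_iff _ hj).1 (hrow ▸ LinearMap.mem_range_self _ _))
  calc sysDist _ _ ≤ _ := sysDist_le_hammingNorm hcyc hnb
    _ = hammingNorm x * hammingNorm y := by
      rw [hammingNorm_sumElim, hammingNorm_vec_vecMulVec, vec_zero, hammingNorm_zero, add_zero,
        mul_comm, Nat.cast_mul]

theorem sysDist_productBoundary_le_right :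
    sysDist (productBoundary d₀ d₁ e) (productBoundary d₁ d₂ e) ≤
      sysDist d₁ d₂ * sysDist (0 : Matrix τ δ (ZMod 2)) e := by
  refine le_sysDist_mul_sysDist fun x y hx hxB _ hyB => ?_
  rw [mulVecLin_apply] at hx
  have hcyc : (productBoundary d₀ d₁ e).mulVecLin
      (Sum.elim (vec (0 : Matrix ε γ (ZMod 2))) (vec (vecMulVec y x))) = 0 := by
    rw [mulVecLin_apply, productBoundary_mulVec_sumElim_vec_eq_zero_iff, vecMulVec_mul,
      vecMul_transpose, hx]
    exact ⟨Matrix.zero_mul _, (Matrix.mul_zero _).trans (funext₂ fun _ _ => (mul_zero _).symm)⟩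
  have hnb : Sum.elim (vec (0 : Matrix ε γ (ZMod 2))) (vec (vecMulVec y x)) ∉
      LinearMap.range (productBoundary d₁ d₂ e).mulVecLin := by
    rw [sumElim_vec_mem_range_productBoundary_iff]
    rintro ⟨P, Q, -, hQ⟩
    obtain ⟨ℓ, hℓ, hℓy⟩ := exists_vecMul_eq_zero_dotProduct_eq_one e hyB
    refine hxB ⟨ℓ ᵥ* Q, ?_⟩
    have := congrArg (ℓ ᵥ* ·) hQ
    simp only [vecMul_vecMulVec, hℓy, one_smul, vecMul_add, ← vecMul_vecMul, hℓ, zero_vecMul,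
      zero_add, vecMul_transpose] at this
    rw [mulVecLin_apply, this]
  calc sysDist _ _ ≤ _ := sysDist_le_hammingNorm hcyc hnb
    _ = hammingNorm x * hammingNorm y := by
      rw [hammingNorm_sumElim, hammingNorm_vec_vecMulVec, vec_zero, hammingNorm_zero, zero_add,
        mul_comm, Nat.cast_mul]

theorem min_le_sysDist_productBoundary :
    min (sysDist d₀ d₁ * sysDist e (0 : Matrix ε τ (ZMod 2)))
        (sysDist d₁ d₂ * sysDist (0 : Matrix τ' δ (ZMod 2)) e) ≤
      sysDist (productBoundary d₀ d₁ e) (productBoundary d₁ d₂ e) := by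
  refine le_sysDist fun x hx hxB => ?_
  obtain ⟨X, Y, rfl⟩ := exists_eq_sumElim_vec x
  rw [mulVecLin_apply, productBoundary_mulVec_sumElim_vec_eq_zero_iff] at hx
  rw [sumElim_vec_mem_range_productBoundary_iff] at hxB
  rw [hammingNorm_sumElim, Nat.cast_add]
  by_cases hX : ∀ j, X j ∈ LinearMap.range d₁.mulVecLin
  · by_cases hY : ∀ g, g ᵥ* e = 0 → g ᵥ* Y ∈ LinearMap.range d₂.mulVecLin
    · exact absurd (exists_boundary_of_slices_mem_range d₁ d₂ e hx.2 hX hY) hxB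
    push Not at hY
    obtain ⟨g, hg, hgY⟩ := hY
    exact (min_le_right _ _).trans
      ((sysDist_mul_sysDist_le_hammingNorm_of_vecMul_notMem_range hx.2 hg hgY).trans le_add_self)
  push Not at hX
  obtain ⟨j, hj⟩ := hX
  exact (min_le_left _ _).trans
    ((sysDist_mul_sysDist_le_hammingNorm_of_row_notMem_range hx.1 hx.2 hj).trans le_self_add)

end SystolicDistance

theorem product_complex_systolic_distance_general
    (a2 a1 a0 am nD1 nD0 : ℕ)
    (d2 : Matrix (Fin a1) (Fin a2) (ZMod 2))   -- ∂_{k+1}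
    (d1 : Matrix (Fin a0) (Fin a1) (ZMod 2))   -- ∂_k
    (d0 : Matrix (Fin am) (Fin a0) (ZMod 2))   -- ∂_{k-1}
    (dD : Matrix (Fin nD0) (Fin nD1) (ZMod 2)) :
    sysDist
      (Matrix.fromBlocks (d0 ⊗ₖ (1 : Matrix (Fin nD1) (Fin nD1) (ZMod 2))) 0
        ((1 : Matrix (Fin a0) (Fin a0) (ZMod 2)) ⊗ₖ dD)
        (d1 ⊗ₖ (1 : Matrix (Fin nD0) (Fin nD0) (ZMod 2))))
      (Matrix.fromBlocks (d1 ⊗ₖ (1 : Matrix (Fin nD1) (Fin nD1) (ZMod 2))) 0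
        ((1 : Matrix (Fin a1) (Fin a1) (ZMod 2)) ⊗ₖ dD)
        (d2 ⊗ₖ (1 : Matrix (Fin nD0) (Fin nD0) (ZMod 2))))
      = min
          (sysDist d0 d1 * sysDist dD (0 : Matrix (Fin nD1) (Fin 0) (ZMod 2)))
          (sysDist d1 d2 * sysDist (0 : Matrix (Fin 0) (Fin nD0) (ZMod 2)) dD) :=
  le_antisymm
    (le_min (sysDist_productBoundary_le_left d0 d1 d2 dD)
      (sysDist_productBoundary_le_right d0 d1 d2 dD))
    (min_le_sysDist_productBoundary d0 d1 d2 dD)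

/-- Zeng–Pryadko, Eq. (51)/Thm. 17; special case: for a chain
complex `C` (displayed around degree `k`: `C_{k+1} --d2--> C_k --d1--> C_{k-1}
--d0--> C_{k-2}`) and a two-term complex `D = (D₁ --dD--> D₀)`, the `k`-systolic
distance of the tensor product complex satisfies
`d_k(C⊗D) = min(d_{k-1}(C)·d₁(D), d_k(C)·d₀(D))`.
Here `(C⊗D)_k = C_{k-1}⊗D₁ ⊕ C_k⊗D₀` etc., with the Leibniz boundary given in
block form by Kronecker products. -/
theorem product_complex_systolic_distance
    (a2 a1 a0 am nD1 nD0 : ℕ)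
    (d2 : Matrix (Fin a1) (Fin a2) (ZMod 2))   -- ∂_{k+1}
    (d1 : Matrix (Fin a0) (Fin a1) (ZMod 2))   -- ∂_k
    (d0 : Matrix (Fin am) (Fin a0) (ZMod 2))   -- ∂_{k-1}
    (h21 : d1 * d2 = 0) (h10 : d0 * d1 = 0)
    (dD : Matrix (Fin nD0) (Fin nD1) (ZMod 2)) :
    sysDist
      (Matrix.fromBlocks (d0 ⊗ₖ (1 : Matrix (Fin nD1) (Fin nD1) (ZMod 2))) 0
        ((1 : Matrix (Fin a0) (Fin a0) (ZMod 2)) ⊗ₖ dD)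
        (d1 ⊗ₖ (1 : Matrix (Fin nD0) (Fin nD0) (ZMod 2))))
      (Matrix.fromBlocks (d1 ⊗ₖ (1 : Matrix (Fin nD1) (Fin nD1) (ZMod 2))) 0
        ((1 : Matrix (Fin a1) (Fin a1) (ZMod 2)) ⊗ₖ dD)
        (d2 ⊗ₖ (1 : Matrix (Fin nD0) (Fin nD0) (ZMod 2))))
      = min
          (sysDist d0 d1 * sysDist dD (0 : Matrix (Fin nD1) (Fin 0) (ZMod 2)))
          (sysDist d1 d2 * sysDist (0 : Matrix (Fin 0) (Fin nD0) (ZMod 2)) dD) :=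
  product_complex_systolic_distance_general a2 a1 a0 am nD1 nD0 d2 d1 d0 dD
end

section
/- Let ḡ : ⊕_{i∈[t]} G[i] → C be the sum of extended chain maps g'[i] from three-term complexes G[i] to a two-term complex C = (C_1 → C_0), where each g[i] satisfies H^0(G[i]) = 0 (trivial cohomology in degree 0). Then for any cocycle (h, r) ∈ ker(δ^0_{cone(ḡ)}) with h ∈ C_0 and r ∈ ⊕_i G[i]_{-1}, we must have h ≠ 0 and h ∈ ker(δ_C), hence the 0-cosystolic distance of cone(ḡ) is at least the 0-cosystolic distance d of the cochain complex of C: d^0(cone(ḡ)) ≥ d. -/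
/-!
The coboundary of the cone is block triangular: on a 0-cochain `x = (r, h)` its `C`-component
is `δ_C h` and its `G`-component is `δ_G r + ḡᵀ h`. So `h` is a cocycle of `C`, and if `h = 0`
then `δ_G r = 0`, which forces `r = 0` because `δ_G` is injective when every `H⁰(G[i])` vanishes.
Hence a nonzero cocycle has `h ≠ 0`, and `|x| ≥ |h| ≥ d`.
-/

open Matrix

theorem hammingNorm_comp_le_of_injective {ι κ β : Type*} [Fintype ι] [Fintype κ]
    [DecidableEq β] [Zero β] {f : ι → κ} (hf : Function.Injective f) (x : κ → β) :
    hammingNorm (x ∘ f) ≤ hammingNorm x :=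
  Finset.card_le_card_of_injOn f (fun i hi => by simpa using hi) hf.injOn

namespace Matrix

variable {R : Type*}

theorem blockDiagonal'_mulVec_apply [NonUnitalNonAssocSemiring R] {o : Type*} [Fintype o]
    [DecidableEq o] {m' n' : o → Type*} [∀ i, Fintype (n' i)]
    (M : ∀ i, Matrix (m' i) (n' i) R) (v : (Σ i, n' i) → R) (i : o) (k : m' i) :
    (blockDiagonal' M *ᵥ v) ⟨i, k⟩ = (M i *ᵥ fun j => v ⟨i, j⟩) k := by
  simp only [mulVec, dotProduct, Fintype.sum_sigma]
  rw [Finset.sum_eq_single i]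
  · simp [blockDiagonal'_apply]
  · intro b _ hb
    exact Finset.sum_eq_zero fun j _ => by simp [blockDiagonal'_apply, Ne.symm hb]
  · simp

theorem ker_mulVecLin_blockDiagonal'_eq_bot [CommSemiring R] {o : Type*} [Fintype o]
    [DecidableEq o] {m' n' : o → Type*} [∀ i, Fintype (n' i)]
    {M : ∀ i, Matrix (m' i) (n' i) R} (hM : ∀ i, LinearMap.ker (mulVecLin (M i)) = ⊥) :
    LinearMap.ker (mulVecLin (blockDiagonal' M)) = ⊥ := by
  rw [LinearMap.ker_eq_bot']
  intro v hv
  funext ⟨i, j⟩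
  have hblock : (fun j => v ⟨i, j⟩) = 0 :=
    (LinearMap.ker_eq_bot'.1 (hM i)) _ <| funext fun k => by
      rw [mulVecLin_apply, ← blockDiagonal'_mulVec_apply]
      exact congrFun hv ⟨i, k⟩
  exact congrFun hblock j

section Cone

variable [NonUnitalNonAssocSemiring R] {m n k l : Type*} [Fintype m] [Fintype k]
  (A : Matrix m n R) (B : Matrix k n R) (D : Matrix k l R) (x : m ⊕ k → R)

theorem transpose_fromBlocks_zero₁₂_mulVec_comp_inl :
    ((fromBlocks A 0 B D)ᵀ *ᵥ x) ∘ Sum.inl = Aᵀ *ᵥ (x ∘ Sum.inl) + Bᵀ *ᵥ (x ∘ Sum.inr) := by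
  funext p
  simp [fromBlocks_transpose, mulVec, dotProduct]

theorem transpose_fromBlocks_zero₁₂_mulVec_comp_inr :
    ((fromBlocks A 0 B D)ᵀ *ᵥ x) ∘ Sum.inr = Dᵀ *ᵥ (x ∘ Sum.inr) := by
  funext p
  simp [fromBlocks_transpose, mulVec, dotProduct]

end Cone

theorem eq_zero_of_transpose_fromBlocks_zero₁₂_mulVec_eq_zero [CommSemiring R]
    {m n k l : Type*} [Fintype m] [Fintype k]
    {A : Matrix m n R} {B : Matrix k n R} {D : Matrix k l R} {x : m ⊕ k → R}
    (hA : LinearMap.ker (mulVecLin Aᵀ) = ⊥) (hx : (fromBlocks A 0 B D)ᵀ *ᵥ x = 0)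
    (hinr : x ∘ Sum.inr = 0) : x = 0 := by
  have hinl : Aᵀ *ᵥ (x ∘ Sum.inl) = 0 := by
    simpa [hinr, hx] using (transpose_fromBlocks_zero₁₂_mulVec_comp_inl A B D x).symm
  have hinl' : x ∘ Sum.inl = 0 := LinearMap.ker_eq_bot'.1 hA _ hinl
  funext s
  cases s with
  | inl p => exact congrFun hinl' p
  | inr q => exact congrFun hinr q

end Matrix

theorem fast_surgery_cone_cosystolic_distance_general
    (t c1n c0n : ℕ) (d : ℕ)
    (g0n gm1n : Fin t → ℕ)
    (dC : Matrix (Fin c0n) (Fin c1n) (ZMod 2))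
    (dG0 : ∀ i, Matrix (Fin (gm1n i)) (Fin (g0n i)) (ZMod 2))
    (gbar0 : Matrix (Fin c0n) ((i : Fin t) × Fin (g0n i)) (ZMod 2))
    (hH0G : ∀ i, LinearMap.ker (Matrix.mulVecLin (dG0 i)ᵀ) = ⊥)
    (hdistC : ∀ h : Fin c0n → ZMod 2,
      Matrix.mulVecLin dCᵀ h = 0 → h ≠ 0 → d ≤ hammingNorm h) :
    ∀ x : ((i : Fin t) × Fin (gm1n i)) ⊕ Fin c0n → ZMod 2,
      Matrix.mulVecLin (Matrix.fromBlocks (Matrix.blockDiagonal' dG0) 0 gbar0 dC)ᵀ x = 0 →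
      x ≠ 0 →
      (x ∘ Sum.inr ≠ 0 ∧
        Matrix.mulVecLin dCᵀ (x ∘ Sum.inr) = 0 ∧
        d ≤ hammingNorm x) := by
  intro x hx hx0
  rw [mulVecLin_apply] at hx
  have hcocycle : mulVecLin dCᵀ (x ∘ Sum.inr) = 0 := by
    rw [mulVecLin_apply, ← transpose_fromBlocks_zero₁₂_mulVec_comp_inr _ gbar0, hx]
    rfl
  have hG : LinearMap.ker (mulVecLin (blockDiagonal' dG0)ᵀ) = ⊥ := by
    rw [blockDiagonal'_transpose]
    exact ker_mulVecLin_blockDiagonal'_eq_bot hH0G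
  have hinr : x ∘ Sum.inr ≠ 0 := fun h0 =>
    hx0 (eq_zero_of_transpose_fromBlocks_zero₁₂_mulVec_eq_zero hG hx h0)
  exact ⟨hinr, hcocycle,
    (hdistC _ hcocycle hinr).trans (hammingNorm_comp_le_of_injective Sum.inr_injective x)⟩

/-- Let `ḡ : ⊕_i G[i] → C` be the sum of extended chain maps from
three-term complexes `G[i] = (G[i]₁ → G[i]₀ → G[i]₋₁)` into a two-term complex
`C = (C₁ --∂C--> C₀)`, and suppose each `G[i]` has trivial cohomology at the
degree of `G[i]₋₁` (which sits in degree `0` of the cone):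
`ker((∂_{G[i],0})ᵀ) = 0`.  If every nonzero `δ_C`-cocycle `h ∈ C₀` (i.e.
`(∂C)ᵀ h = 0`) has Hamming weight at least `d`, then for every nonzero cocycle
`x = (r, h) ∈ ker(δ⁰_{cone(ḡ)})` (with `r ∈ ⊕_i G[i]₋₁`, `h ∈ C₀`) we have
`h ≠ 0`, `h ∈ ker(δ_C)` and `|x| ≥ d`; hence `d⁰(cone(ḡ)) ≥ d`. -/
theorem fast_surgery_cone_cosystolic_distance
    (t c1n c0n : ℕ) (d : ℕ)
    (g1n g0n gm1n : Fin t → ℕ)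
    (dC : Matrix (Fin c0n) (Fin c1n) (ZMod 2))
    (dG1 : ∀ i, Matrix (Fin (g0n i)) (Fin (g1n i)) (ZMod 2))
    (dG0 : ∀ i, Matrix (Fin (gm1n i)) (Fin (g0n i)) (ZMod 2))
    (gbar0 : Matrix (Fin c0n) ((i : Fin t) × Fin (g0n i)) (ZMod 2))
    (hchain : ∀ i, dG0 i * dG1 i = 0)
    (hH0G : ∀ i, LinearMap.ker (Matrix.mulVecLin (dG0 i)ᵀ) = ⊥)
    (hdistC : ∀ h : Fin c0n → ZMod 2,
      Matrix.mulVecLin dCᵀ h = 0 → h ≠ 0 → d ≤ hammingNorm h) :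
    ∀ x : ((i : Fin t) × Fin (gm1n i)) ⊕ Fin c0n → ZMod 2,
      Matrix.mulVecLin (Matrix.fromBlocks (Matrix.blockDiagonal' dG0) 0 gbar0 dC)ᵀ x = 0 →
      x ≠ 0 →
      (x ∘ Sum.inr ≠ 0 ∧
        Matrix.mulVecLin dCᵀ (x ∘ Sum.inr) = 0 ∧
        d ≤ hammingNorm x) :=
  fast_surgery_cone_cosystolic_distance_general t c1n c0n d g0n gm1n dC dG0 gbar0 hH0G hdistC
end

section
/- Suppose G[i] (i ∈ [t]) are three-term complexes attached via chain maps g[i] to a two-term complex C = (C_1 → C_0) with first systolic distance d (every nonzero element of ker(∂_C) not in the span of the measured codewords has weight ≥ d, and in fact every nonzero element of ker(∂_C) has weight ≥ d). Assume: (a) each ∂_{G[i],1} has boundary Cheeger constant ≥ 1 with all-ones kernel vector v_i satisfying g[i]_1(v_i) = c_i ∈ ker(∂_C); (b) each g[i]_1 is 1-sparse (each column has at most one nonzero entry, mapping basis vectors of G[i]_1 injectively into the support of c_i). Then for any homology representative (c_j, 0,…,0) of an unmeasured class and any (v_1,…,v_t) ∈ ⊕_i G[i]_1, the deformed chain satisfies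 |c_j + ∑_i g[i]_1(v_i)| + ∑_i |∂_{G[i],1}(v_i)| ≥ d. Consequently d_1(cone(ḡ)) ≥ d. -/
open Matrix

/-!
Flip each `vᵢ` to `uᵢ = vᵢ - εᵢ • 1` (`εᵢ ∈ 𝔽₂`) so that `|uᵢ| ≤ min(|vᵢ|, n - |vᵢ|)`, which the
Cheeger bound caps by `|∂vᵢ|`. Since `gᵢ(1) = cᵢ`, the cycle `z = c_j + ∑ εᵢ cᵢ` equals
`(c_j + ∑ gᵢ(vᵢ)) - ∑ gᵢ(uᵢ)`; it is nonzero because `c_j ∉ span{cᵢ}`, so `d ≤ |z|`. By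
1-sparsity `|gᵢ(uᵢ)| ≤ |uᵢ| ≤ |∂vᵢ|`, and the triangle inequality finishes.
-/

section HammingNorm

variable {ι : Type*} [Fintype ι] {β : ι → Type*}

theorem hammingNorm_add_le [∀ i, AddZeroClass (β i)] [∀ i, DecidableEq (β i)]
    (x y : ∀ i, β i) : hammingNorm (x + y) ≤ hammingNorm x + hammingNorm y := by
  classical
  refine (Finset.card_le_card fun i hi => ?_).trans (Finset.card_union_le _ _)
  simp only [Finset.mem_filter, Finset.mem_union, Finset.mem_univ, true_and,
    Pi.add_apply] at hi ⊢
  by_contra! h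
  exact hi (by rw [h.1, h.2, add_zero])

theorem hammingNorm_neg [∀ i, SubtractionMonoid (β i)] [∀ i, DecidableEq (β i)]
    (x : ∀ i, β i) : hammingNorm (-x) = hammingNorm x :=
  hammingNorm_comp (fun _ => Neg.neg) (fun _ => neg_injective) fun _ => neg_zero

theorem hammingNorm_sub_le [∀ i, SubtractionMonoid (β i)] [∀ i, DecidableEq (β i)]
    (x y : ∀ i, β i) : hammingNorm (x - y) ≤ hammingNorm x + hammingNorm y := by
  simpa only [sub_eq_add_neg, hammingNorm_neg] using hammingNorm_add_le x (-y)

theorem hammingNorm_sum_le [∀ i, AddCommMonoid (β i)] [∀ i, DecidableEq (β i)]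
    {κ : Type*} (s : Finset κ) (f : κ → ∀ i, β i) :
    hammingNorm (∑ k ∈ s, f k) ≤ ∑ k ∈ s, hammingNorm (f k) :=
  Finset.le_sum_of_subadditive _ hammingNorm_zero.le hammingNorm_add_le s f

theorem ZMod.hammingNorm_sub_one (x : ι → ZMod 2) :
    hammingNorm (x - 1) = Fintype.card ι - hammingNorm x := by
  have hflip : ∀ a : ZMod 2, a - 1 ≠ 0 ↔ ¬a ≠ 0 := by decide
  simp only [hammingNorm, Pi.sub_apply, Pi.one_apply, hflip]
  have hsplit := Finset.card_filter_add_card_filter_not (s := Finset.univ) (fun i => x i ≠ 0)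
  rw [Finset.card_univ] at hsplit
  omega

theorem ZMod.exists_hammingNorm_sub_smul_one_le (x : ι → ZMod 2) :
    ∃ ε : ZMod 2,
      hammingNorm (x - ε • 1) ≤ min (hammingNorm x) (Fintype.card ι - hammingNorm x) := by
  rcases le_total (hammingNorm x) (Fintype.card ι - hammingNorm x) with h | h
  · exact ⟨0, by simp [h]⟩
  · exact ⟨1, by simp [ZMod.hammingNorm_sub_one, h]⟩

end HammingNorm

theorem Matrix.hammingNorm_mulVec_le {m n R : Type*} [Fintype m] [Fintype n] [Semiring R]
    [DecidableEq R] (M : Matrix m n R) (hM : ∀ j, hammingNorm (Mᵀ j) ≤ 1) (u : n → R) :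
    hammingNorm (M *ᵥ u) ≤ hammingNorm u := by
  have hsupp : M *ᵥ u = ∑ j with u j ≠ 0, MulOpposite.op (u j) • Mᵀ j := by
    rw [mulVec_eq_sum, Finset.sum_filter_of_ne]
    intro j _ hj hu
    exact hj (by rw [hu, MulOpposite.op_zero, zero_smul])
  calc hammingNorm (M *ᵥ u)
      ≤ ∑ j with u j ≠ 0, hammingNorm (MulOpposite.op (u j) • Mᵀ j) :=
        hsupp ▸ hammingNorm_sum_le _ _
    _ ≤ ∑ j with u j ≠ 0, 1 :=
        Finset.sum_le_sum fun j _ => hammingNorm_smul_le_hammingNorm.trans (hM j)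
    _ = hammingNorm u := by rw [Finset.sum_const, smul_eq_mul, mul_one]; rfl

theorem deformed_chain_weight_lower_bound_general
    (t c1n c0n : ℕ) (d : ℕ)
    (g1n g0n : Fin t → ℕ)
    (dC : Matrix (Fin c0n) (Fin c1n) (ZMod 2))
    (dG1 : ∀ i, Matrix (Fin (g0n i)) (Fin (g1n i)) (ZMod 2))
    (gmap1 : ∀ i, Matrix (Fin c1n) (Fin (g1n i)) (ZMod 2))
    (c : Fin t → Fin c1n → ZMod 2)
    (hcker : ∀ i, dC.mulVecLin (c i) = 0)
    (hdistC : ∀ x : Fin c1n → ZMod 2, dC.mulVecLin x = 0 → x ≠ 0 → d ≤ hammingNorm x)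
    (hcheeger : ∀ i (v : Fin (g1n i) → ZMod 2),
      min (hammingNorm v) (g1n i - hammingNorm v) ≤ hammingNorm ((dG1 i).mulVecLin v))
    (hones_c : ∀ i, (gmap1 i).mulVecLin (fun _ => 1) = c i)
    (hsparse : ∀ i (j : Fin (g1n i)),
      ({r | gmap1 i r j ≠ 0} : Finset (Fin c1n)).card ≤ 1)
    (cj : Fin c1n → ZMod 2)
    (hcjker : dC.mulVecLin cj = 0)
    (hcjindep : cj ∉ Submodule.span (ZMod 2) (Set.range c))
    (v : ∀ i, Fin (g1n i) → ZMod 2) :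
    d ≤ hammingNorm (cj + ∑ i, (gmap1 i).mulVecLin (v i))
        + ∑ i, hammingNorm ((dG1 i).mulVecLin (v i)) := by
  choose ε hε using fun i => ZMod.exists_hammingNorm_sub_smul_one_le (v i)
  set u : ∀ i, Fin (g1n i) → ZMod 2 := fun i => v i - ε i • 1
  have hu : ∀ i, hammingNorm ((gmap1 i).mulVecLin (u i)) ≤ hammingNorm ((dG1 i).mulVecLin (v i)) :=
    fun i => ((gmap1 i).hammingNorm_mulVec_le (hsparse i) (u i)).trans <|
      (hε i).trans (by simpa using hcheeger i (v i))
  set z := cj + ∑ i, ε i • c i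
  have hz : z = (cj + ∑ i, (gmap1 i).mulVecLin (v i)) - ∑ i, (gmap1 i).mulVecLin (u i) := by
    simp only [z, u, map_sub, map_smul, Pi.one_def, hones_c, Finset.sum_sub_distrib]
    abel
  have hz_ker : dC.mulVecLin z = 0 := by
    simp only [z, map_add, map_sum, map_smul, hcjker, hcker, smul_zero, Finset.sum_const_zero,
      add_zero]
  have hz_ne : z ≠ 0 := fun h0 => hcjindep <|
    (Submodule.mem_span_range_iff_exists_fun _).2
      ⟨-ε, by
        simp only [eq_neg_of_add_eq_zero_left h0, Pi.neg_apply, neg_smul, Finset.sum_neg_distrib]⟩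
  calc d ≤ hammingNorm z := hdistC z hz_ker hz_ne
    _ ≤ hammingNorm (cj + ∑ i, (gmap1 i).mulVecLin (v i))
        + ∑ i, hammingNorm ((gmap1 i).mulVecLin (u i)) :=
      hz ▸ (hammingNorm_sub_le _ _).trans (by gcongr; exact hammingNorm_sum_le _ _)
    _ ≤ _ := by gcongr with i; exact hu i

/-- Suppose three-term complexes `G[i]` (`i ∈ [t]`) are attached via
chain maps `g[i]` to a two-term complex `C = (C₁ --∂C--> C₀)` such that every
nonzero element of `ker ∂_C` has Hamming weight `≥ d`.  Assume:
(a) each `∂_{G[i],1}` has boundary Cheeger constant `≥ 1`, with the all-ones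
vector in its kernel and `g[i]₁(1) = c_i ∈ ker ∂_C`;
(b) each `g[i]₁` is 1-sparse (every column has at most one nonzero entry).
Then for any representative `c_j ∈ ker ∂_C` of an unmeasured class
(`c_j ∉ span{c_1,…,c_t}`) and any `(v_1,…,v_t) ∈ ⊕_i G[i]₁`, the deformed chain
satisfies `|c_j + ∑_i g[i]₁(v_i)| + ∑_i |∂_{G[i],1}(v_i)| ≥ d`
(consequently, `d₁(cone(ḡ)) ≥ d`). -/
theorem deformed_chain_weight_lower_bound
    (t c1n c0n : ℕ) (d : ℕ)
    (g1n g0n : Fin t → ℕ)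
    (dC : Matrix (Fin c0n) (Fin c1n) (ZMod 2))
    (dG1 : ∀ i, Matrix (Fin (g0n i)) (Fin (g1n i)) (ZMod 2))
    (gmap1 : ∀ i, Matrix (Fin c1n) (Fin (g1n i)) (ZMod 2))
    (c : Fin t → Fin c1n → ZMod 2)
    (hcker : ∀ i, dC.mulVecLin (c i) = 0)
    (hdistC : ∀ x : Fin c1n → ZMod 2, dC.mulVecLin x = 0 → x ≠ 0 → d ≤ hammingNorm x)
    (hcheeger : ∀ i (v : Fin (g1n i) → ZMod 2),
      min (hammingNorm v) (g1n i - hammingNorm v) ≤ hammingNorm ((dG1 i).mulVecLin v))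
    (hones_ker : ∀ i, (dG1 i).mulVecLin (fun _ => 1) = 0)
    (hones_c : ∀ i, (gmap1 i).mulVecLin (fun _ => 1) = c i)
    (hsparse : ∀ i (j : Fin (g1n i)),
      ({r | gmap1 i r j ≠ 0} : Finset (Fin c1n)).card ≤ 1)
    (cj : Fin c1n → ZMod 2)
    (hcjker : dC.mulVecLin cj = 0)
    (hcjindep : cj ∉ Submodule.span (ZMod 2) (Set.range c))
    (v : ∀ i, Fin (g1n i) → ZMod 2) :
    d ≤ hammingNorm (cj + ∑ i, (gmap1 i).mulVecLin (v i))
        + ∑ i, hammingNorm ((dG1 i).mulVecLin (v i)) :=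
  deformed_chain_weight_lower_bound_general t c1n c0n d g1n g0n dC dG1 gmap1 c hcker hdistC hcheeger
    hones_c hsparse cj hcjker hcjindep v
end
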